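/- Let n ≥ 1 be an integer and let (α,β,u,v) ∈ V_n^4 be such that the Wang tile with right label α, top label β, left label u and bottom label v belongs to T'_n. Then there exists exactly one valid rectangular pattern over T'_n whose right, top, left and bottom label words are respectively τ_n(α), τ_n(β), τ_n(u) and τ_n(v). -/

import Mathlib

structure WangTile (C : Type*) where
  right : C
  top : C
  left : C
  bottom : C
deriving DecidableEq

abbrev Lbl : Type := ℤ × ℤ × ℤ

def Vn (n : ℤ) : Set Lbl :=
  {v | 0 ≤ v.1 ∧ v.1 ≤ v.2.1 ∧ v.2.1 ≤ 1 ∧ v.2.1 ≤ v.2.2 ∧ v.2.2 ≤ n + 1}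

def hatT {C : Type*} (t : WangTile C) : WangTile C :=
  ⟨t.top, t.right, t.bottom, t.left⟩

def whiteTiles (n : ℤ) : Set (WangTile Lbl) :=
  {t | ∃ i j : ℤ, 1 ≤ i ∧ i ≤ n ∧ 1 ≤ j ∧ j ≤ n ∧
    t = ⟨(1, 1, i + 1), (1, 1, j + 1), (1, 1, i), (1, 1, j)⟩}

def blueH (n : ℤ) : Set (WangTile Lbl) :=
  {t | ∃ i : ℤ, 0 ≤ i ∧ i ≤ n ∧ t = ⟨(0, 0, i + 1), (1, 1, 1), (0, 0, i), (1, 1, n)⟩}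

def greenH (n : ℤ) : Set (WangTile Lbl) :=
  {t | ∃ i : ℤ, 0 ≤ i ∧ i ≤ n ∧ t = ⟨(0, 1, i + 1), (1, 1, 1), (0, 0, i), (1, 1, n + 1)⟩}

def yellowH (n : ℤ) : Set (WangTile Lbl) :=
  {t | ∃ i : ℤ, 1 ≤ i ∧ i ≤ n ∧ t = ⟨(0, 1, i + 1), (1, 1, 2), (0, 1, i), (1, 1, n + 1)⟩}

def antiH (n : ℤ) : Set (WangTile Lbl) :=
  {t | ∃ i : ℤ, 1 ≤ i ∧ i ≤ n ∧ t = ⟨(0, 0, i + 1), (1, 1, 2), (0, 1, i), (1, 1, n)⟩}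

def junctionTile (n k l r s : ℤ) : WangTile Lbl :=
  ⟨(0, k, l), (0, r, s), (0, s, r + n), (0, l, k + n)⟩

def jPairs : Set (ℤ × ℤ) := {(0, 0), (0, 1), (1, 1)}

def junctions (n : ℤ) : Set (WangTile Lbl) :=
  {t | ∃ k l r s : ℤ, (k, l) ∈ jPairs ∧ (r, s) ∈ jPairs ∧ t = junctionTile n k l r s}

def Text (n : ℤ) : Set (WangTile Lbl) :=
  whiteTiles n ∪ blueH n ∪ greenH n ∪ yellowH n ∪ antiH n ∪
    hatT '' blueH n ∪ hatT '' greenH n ∪ hatT '' yellowH n ∪ hatT '' antiH n ∪ junctions n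

def Dset (n : ℤ) : Set (WangTile Lbl) :=
  {(⟨(0, 0, n + 1), (1, 1, 1), (0, 0, n), (1, 1, n)⟩ : WangTile Lbl),
    hatT (⟨(0, 0, n + 1), (1, 1, 1), (0, 0, n), (1, 1, n)⟩ : WangTile Lbl),
    junctionTile n 0 0 1 1, junctionTile n 1 1 0 0}

def Tmet (n : ℤ) : Set (WangTile Lbl) :=
  Text n \ (antiH n ∪ hatT '' antiH n ∪ Dset n)

def ValidConfig {C : Type*} (T : Set (WangTile C)) (x : ℤ × ℤ → WangTile C) : Prop :=
  (∀ m, x m ∈ T) ∧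
    (∀ m : ℤ × ℤ, (x m).right = (x (m.1 + 1, m.2)).left) ∧
    (∀ m : ℤ × ℤ, (x m).top = (x (m.1, m.2 + 1)).bottom)

def ValidPattern {C : Type*} (T : Set (WangTile C)) (w h : ℕ) (p : ℕ → ℕ → WangTile C) : Prop :=
  (∀ i j, i < w → j < h → p i j ∈ T) ∧
    (∀ i j, i + 1 < w → j < h → (p i j).right = (p (i + 1) j).left) ∧
    (∀ i j, i < w → j + 1 < h → (p i j).top = (p i (j + 1)).bottom)

def bottomWord {C : Type*} (w : ℕ) (p : ℕ → ℕ → WangTile C) : List C :=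
  (List.range w).map fun i => (p i 0).bottom

def topWord {C : Type*} (w h : ℕ) (p : ℕ → ℕ → WangTile C) : List C :=
  (List.range w).map fun i => (p i (h - 1)).top

def leftWord {C : Type*} (h : ℕ) (p : ℕ → ℕ → WangTile C) : List C :=
  (List.range h).map fun j => (p 0 j).left

def rightWord {C : Type*} (w h : ℕ) (p : ℕ → ℕ → WangTile C) : List C :=
  (List.range h).map fun j => (p (w - 1) j).right

def tau (n : ℤ) (v : Lbl) : List Lbl :=
  if v.1 = v.2.2 then
    (0, v.1 - v.2.1 + 1, n + 1) :: List.replicate (n - v.2.2).toNat (1, 1, n + 1)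
  else
    (0, v.1 - v.2.1 + 1, n) ::
      (List.replicate (v.2.2 - v.1 - 1).toNat (1, 1, n) ++
        List.replicate (n + 1 - v.2.2).toNat (1, 1, n + 1))

/-!
Every tile of `T'_n` is determined by its left and bottom labels: the first coordinates of
these two labels tell the family (white, horizontal, vertical or junction), and inside a family
the remaining labels are forced. So a valid pattern over `T'_n` is determined, tile by tile, by
its left and bottom words; this gives uniqueness, and the size `|τ v| × |τ u|`.

For existence, filling that rectangle from `τ u` and `τ v` gives an explicit pattern: a junction
tile in the corner, blue/green/yellow tiles along the bottom row, their transposes along the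
left column, and white tiles inside. Its right word is `τ α`, checked family by family.
Transposition `hatT` preserves `T'_n` and swaps right and top words, so the top word follows.
-/

section Pattern

variable {C : Type*}

def patternTranspose (p : ℕ → ℕ → WangTile C) : ℕ → ℕ → WangTile C :=
  fun i j => hatT (p j i)

theorem topWord_eq_rightWord_patternTranspose (w h : ℕ) (p : ℕ → ℕ → WangTile C) :
    topWord w h p = rightWord h w (patternTranspose p) := rfl

theorem leftWord_eq_bottomWord_patternTranspose (h : ℕ) (p : ℕ → ℕ → WangTile C) :
    leftWord h p = bottomWord h (patternTranspose p) := rfl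

@[simp] theorem length_bottomWord (w : ℕ) (p : ℕ → ℕ → WangTile C) :
    (bottomWord w p).length = w := by
  simp [bottomWord]

@[simp] theorem length_leftWord (h : ℕ) (p : ℕ → ℕ → WangTile C) :
    (leftWord h p).length = h := by
  simp [leftWord]

theorem ValidPattern.eq_of_leftWord_eq_of_bottomWord_eq {T : Set (WangTile C)}
    (hT : ∀ t ∈ T, ∀ t' ∈ T, t.left = t'.left → t.bottom = t'.bottom → t = t')
    {w h : ℕ} {p q : ℕ → ℕ → WangTile C} (hp : ValidPattern T w h p)
    (hq : ValidPattern T w h q) (hl : leftWord h p = leftWord h q)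
    (hb : bottomWord w p = bottomWord w q) {i j : ℕ} (hi : i < w) (hj : j < h) :
    p i j = q i j := by
  obtain ⟨hpT, hpR, hpU⟩ := hp
  obtain ⟨hqT, hqR, hqU⟩ := hq
  have hl' : ∀ j < h, (p 0 j).left = (q 0 j).left := by
    simpa [leftWord, List.map_inj_left] using hl
  have hb' : ∀ i < w, (p i 0).bottom = (q i 0).bottom := by
    simpa [bottomWord, List.map_inj_left] using hb
  have tile_eq : ∀ {i j}, i < w → j < h → (p i j).left = (q i j).left →
      (p i j).bottom = (q i j).bottom → p i j = q i j :=
    fun hi hj => hT _ (hpT _ _ hi hj) _ (hqT _ _ hi hj)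
  induction j generalizing i with
  | zero =>
    induction i with
    | zero => exact tile_eq hi hj (hl' 0 hj) (hb' 0 hi)
    | succ i ih =>
      refine tile_eq hi hj ?_ (hb' _ hi)
      rw [← hpR i 0 hi hj, ← hqR i 0 hi hj, ih (by omega)]
  | succ j ihj =>
    induction i with
    | zero =>
      refine tile_eq hi hj (hl' _ hj) ?_
      rw [← hpU 0 j hi hj, ← hqU 0 j hi hj, ihj hi (by omega)]
    | succ i ih =>
      refine tile_eq hi hj ?_ ?_
      · rw [← hpR i (j + 1) hi hj, ← hqR i (j + 1) hi hj, ih (by omega)]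
      · rw [← hpU (i + 1) j hi hj, ← hqU (i + 1) j hi hj, ihj hi (by omega)]

end Pattern

def tauBit (x : Lbl) (k : ℤ) : ℤ := if k ≤ x.2.2 - x.1 then 0 else 1

def tauLetter (n : ℤ) (x : Lbl) : ℕ → Lbl
  | 0 => (0, x.1 - x.2.1 + 1, tauBit x 1 + n)
  | k + 1 => (1, 1, tauBit x (k + 2) + n)

theorem tau_eq_map_range {n : ℤ} {x : Lbl} (hx : x ∈ Vn n) :
    tau n x = (List.range (tau n x).length).map (tauLetter n x) := by
  obtain ⟨hx₀, hx₁, hx₂, hx₃, hx₄⟩ := hx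
  refine List.ext_getElem (by simp) fun k hk _ => ?_
  rw [List.getElem_map, List.getElem_range]
  unfold tau at hk ⊢
  split_ifs at hk ⊢ with hx <;> rcases k with _ | k
  · simp [tauLetter, tauBit, hx, add_comm]
  · simp [tauLetter, tauBit, hx]; omega
  · simp [tauLetter, tauBit]; omega
  · simp only [List.length_cons, List.length_append, List.length_replicate] at hk
    simp only [List.getElem_cons_succ, List.getElem_append, List.getElem_replicate,
      List.length_replicate, tauLetter, tauBit]
    split_ifs <;> simp <;> omega

theorem length_tau {n : ℤ} (hn : 1 ≤ n) {x : Lbl} (hx : x ∈ Vn n) :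
    (tau n x).length = (n + 1 - x.1).toNat := by
  obtain ⟨hx₀, hx₁, hx₂, hx₃, hx₄⟩ := hx
  unfold tau
  split_ifs <;> simp <;> omega

theorem length_tau_pos (n : ℤ) (x : Lbl) : 0 < (tau n x).length := by
  unfold tau; split_ifs <;> simp

theorem tauBit_pair_mem_jPairs (x : Lbl) (k : ℤ) : (tauBit x k, tauBit x (k + 1)) ∈ jPairs := by
  simp only [jPairs, tauBit, Set.mem_insert_iff, Set.mem_singleton_iff, Prod.mk.injEq]
  split_ifs <;> omega

theorem tauBit_one_mem_jPairs {n : ℤ} {x : Lbl} (hx : x ∈ Vn n) :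
    (tauBit x 1, x.1 - x.2.1 + 1) ∈ jPairs := by
  obtain ⟨hx₀, hx₁, hx₂, hx₃, hx₄⟩ := hx
  simp only [jPairs, tauBit, Set.mem_insert_iff, Set.mem_singleton_iff, Prod.mk.injEq]
  split_ifs <;> omega

def whiteTile (i j : ℤ) : WangTile Lbl := ⟨(1, 1, i + 1), (1, 1, j + 1), (1, 1, i), (1, 1, j)⟩

/-- With `(b, b')` equal to `(0, 0)`, `(0, 1)`, `(1, 1)`, `(1, 0)` this is the blue, green,
yellow, antigreen horizontal tile of index `m`. -/
def horizontalTile (n b b' m : ℤ) : WangTile Lbl :=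
  ⟨(0, b', m + 1), (1, 1, b + 1), (0, b, m), (1, 1, b' + n)⟩

theorem whiteTile_mem_Text {n i j : ℤ} (hi : 1 ≤ i) (hi' : i ≤ n) (hj : 1 ≤ j) (hj' : j ≤ n) :
    whiteTile i j ∈ Text n := by
  have h : whiteTile i j ∈ whiteTiles n := ⟨i, j, hi, hi', hj, hj', rfl⟩
  simp only [Text, Set.mem_union]; tauto

theorem horizontalTile_mem_Text {n b b' m : ℤ} (hb : (b, b') ∈ jPairs) (hm : b ≤ m)
    (hm' : m ≤ n) : horizontalTile n b b' m ∈ Text n := by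
  have h : horizontalTile n b b' m ∈ blueH n ∪ greenH n ∪ yellowH n := by
    simp only [jPairs, Set.mem_insert_iff, Set.mem_singleton_iff, Prod.mk.injEq] at hb
    rcases hb with ⟨rfl, rfl⟩ | ⟨rfl, rfl⟩ | ⟨rfl, rfl⟩
    · exact Or.inl (Or.inl ⟨m, hm, hm', by simp [horizontalTile, add_comm]⟩)
    · exact Or.inl (Or.inr ⟨m, hm, hm', by simp [horizontalTile, add_comm]⟩)
    · exact Or.inr ⟨m, hm, hm', by simp [horizontalTile, add_comm]⟩
  simp only [Text, Set.mem_union] at h ⊢; tauto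

namespace Text

variable {n : ℤ} {t : WangTile Lbl}

theorem hatT_mem (ht : t ∈ Text n) : hatT t ∈ Text n := by
  rcases ht with ((((((((⟨i, j, hi, hi', hj, hj', rfl⟩ | h) | h) | h) | h) |
    ⟨s, h, rfl⟩) | ⟨s, h, rfl⟩) | ⟨s, h, rfl⟩) | ⟨s, h, rfl⟩) | ⟨k, l, r, s, hkl, hrs, rfl⟩
  · exact whiteTile_mem_Text hj hj' hi hi'
  case inr => exact Set.mem_union_right _ ⟨r, s, k, l, hrs, hkl, rfl⟩
  all_goals simp only [Text, Set.mem_union, Set.mem_image]; aesop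

def tileOfLeftBottom (n : ℤ) (l b : Lbl) : WangTile Lbl :=
  if l.1 = 1 then
    if b.1 = 1 then ⟨(1, 1, l.2.2 + 1), (1, 1, b.2.2 + 1), l, b⟩
    else ⟨(1, 1, b.2.1 + 1), (0, l.2.2 - n, b.2.2 + 1), l, b⟩
  else
    if b.1 = 1 then ⟨(0, b.2.2 - n, l.2.2 + 1), (1, 1, l.2.1 + 1), l, b⟩
    else ⟨(0, b.2.2 - n, b.2.1), (0, l.2.2 - n, l.2.1), l, b⟩

theorem tileOfLeftBottom_eq (ht : t ∈ Text n) : tileOfLeftBottom n t.left t.bottom = t := by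
  rcases ht with ((((((((⟨i, j, -, -, -, -, rfl⟩ | ⟨i, -, -, rfl⟩) | ⟨i, -, -, rfl⟩) |
    ⟨i, -, -, rfl⟩) | ⟨i, -, -, rfl⟩) | ⟨s, ⟨i, -, -, rfl⟩, rfl⟩) | ⟨s, ⟨i, -, -, rfl⟩, rfl⟩) |
    ⟨s, ⟨i, -, -, rfl⟩, rfl⟩) | ⟨s, ⟨i, -, -, rfl⟩, rfl⟩) | ⟨k, l, r, s, -, -, rfl⟩ <;>
    simp [tileOfLeftBottom, hatT, junctionTile]

theorem eq_of_left_eq_of_bottom_eq :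
    ∀ t ∈ Text n, ∀ t' ∈ Text n, t.left = t'.left → t.bottom = t'.bottom → t = t' := by
  intro t ht t' ht' hl hb
  rw [← tileOfLeftBottom_eq ht, ← tileOfLeftBottom_eq ht', hl, hb]

theorem labels_mem_Vn (hn : 1 ≤ n) (ht : t ∈ Text n) :
    t.right ∈ Vn n ∧ t.top ∈ Vn n ∧ t.left ∈ Vn n ∧ t.bottom ∈ Vn n := by
  rcases ht with ((((((((⟨i, j, _, _, _, _, rfl⟩ | ⟨i, _, _, rfl⟩) | ⟨i, _, _, rfl⟩) |
    ⟨i, _, _, rfl⟩) | ⟨i, _, _, rfl⟩) | ⟨s, ⟨i, _, _, rfl⟩, rfl⟩) | ⟨s, ⟨i, _, _, rfl⟩, rfl⟩) |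
    ⟨s, ⟨i, _, _, rfl⟩, rfl⟩) | ⟨s, ⟨i, _, _, rfl⟩, rfl⟩) | ⟨k, l, r, s, hkl, hrs, rfl⟩ <;>
    simp only [Vn, Set.mem_ofPred_eq, hatT, junctionTile, jPairs, Set.mem_insert_iff,
      Set.mem_singleton_iff, Prod.mk.injEq] at * <;> omega

theorem right_fst_eq_left_fst (ht : t ∈ Text n) : t.right.1 = t.left.1 := by
  rcases ht with ((((((((⟨i, j, -, -, -, -, rfl⟩ | ⟨i, -, -, rfl⟩) | ⟨i, -, -, rfl⟩) |
    ⟨i, -, -, rfl⟩) | ⟨i, -, -, rfl⟩) | ⟨s, ⟨i, -, -, rfl⟩, rfl⟩) | ⟨s, ⟨i, -, -, rfl⟩, rfl⟩) |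
    ⟨s, ⟨i, -, -, rfl⟩, rfl⟩) | ⟨s, ⟨i, -, -, rfl⟩, rfl⟩) | ⟨k, l, r, s, -, -, rfl⟩ <;> rfl

theorem bottom_fst_eq_one_of_left_lt (ht : t ∈ Text n) (h : t.left.2.2 < n) :
    t.bottom.1 = 1 := by
  rcases ht with ((((((((⟨i, j, _, _, _, _, rfl⟩ | ⟨i, _, _, rfl⟩) | ⟨i, _, _, rfl⟩) |
    ⟨i, _, _, rfl⟩) | ⟨i, _, _, rfl⟩) | ⟨s, ⟨i, _, _, rfl⟩, rfl⟩) | ⟨s, ⟨i, _, _, rfl⟩, rfl⟩) |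
    ⟨s, ⟨i, _, _, rfl⟩, rfl⟩) | ⟨s, ⟨i, _, _, rfl⟩, rfl⟩) | ⟨k, l, r, s, hkl, hrs, rfl⟩ <;>
    simp only [hatT, junctionTile, jPairs, Set.mem_insert_iff, Set.mem_singleton_iff,
      Prod.mk.injEq] at * <;> omega

end Text

def substPattern (n : ℤ) (u v : Lbl) : ℕ → ℕ → WangTile Lbl
  | 0, 0 => junctionTile n (tauBit v 1) (v.1 - v.2.1 + 1) (tauBit u 1) (u.1 - u.2.1 + 1)
  | i + 1, 0 => horizontalTile n (tauBit v (i + 1)) (tauBit v (i + 2)) (v.1 - v.2.1 + i + 1)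
  | 0, j + 1 => hatT (horizontalTile n (tauBit u (j + 1)) (tauBit u (j + 2)) (u.1 - u.2.1 + j + 1))
  | i + 1, j + 1 => whiteTile (tauBit u (j + 1) + i + 1) (tauBit v (i + 1) + j + 1)

theorem patternTranspose_substPattern (n : ℤ) (u v : Lbl) :
    patternTranspose (substPattern n u v) = substPattern n v u := by
  ext (_ | i) (_ | j) <;> rfl

section SubstPattern

variable {n : ℤ} {u v : Lbl}

theorem substPattern_mem_of_snd_eq_zero (hu : u ∈ Vn n) (hv : v ∈ Vn n) {i : ℕ}
    (hi : i < (n + 1 - v.1).toNat) : substPattern n u v i 0 ∈ Text n := by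
  rcases i with _ | i
  · have : substPattern n u v 0 0 ∈ junctions n :=
      ⟨_, _, _, _, tauBit_one_mem_jPairs hv, tauBit_one_mem_jPairs hu, rfl⟩
    simp only [Text, Set.mem_union]; tauto
  · obtain ⟨hv₀, hv₁, hv₂, hv₃, hv₄⟩ := hv
    refine horizontalTile_mem_Text ?_ ?_ (by omega)
    · simpa [add_assoc] using tauBit_pair_mem_jPairs v (i + 1)
    · simp only [tauBit]; split_ifs <;> omega

-- `hvu` and `huv` keep the indices of the white tiles at most `n`.
theorem substPattern_mem (hu : u ∈ Vn n) (hv : v ∈ Vn n) (hvu : u.2.2 < n → v.1 = 1)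
    (huv : v.2.2 < n → u.1 = 1) {i j : ℕ} (hi : i < (n + 1 - v.1).toNat)
    (hj : j < (n + 1 - u.1).toNat) : substPattern n u v i j ∈ Text n := by
  rcases j with _ | j
  · exact substPattern_mem_of_snd_eq_zero hu hv hi
  rcases i with _ | i
  · exact Text.hatT_mem (substPattern_mem_of_snd_eq_zero hv hu hj)
  · obtain ⟨hu₀, hu₁, hu₂, hu₃, hu₄⟩ := hu
    obtain ⟨hv₀, hv₁, hv₂, hv₃, hv₄⟩ := hv
    refine whiteTile_mem_Text ?_ ?_ ?_ ?_ <;> simp only [tauBit] <;> split_ifs <;> omega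

theorem substPattern_right_eq_left (i j : ℕ) :
    (substPattern n u v i j).right = (substPattern n u v (i + 1) j).left := by
  rcases i with _ | i <;> rcases j with _ | j <;>
    simp [substPattern, junctionTile, horizontalTile, whiteTile, hatT, add_assoc,
      one_add_one_eq_two]

theorem substPattern_top_eq_bottom (i j : ℕ) :
    (substPattern n u v i j).top = (substPattern n u v i (j + 1)).bottom := by
  rcases i with _ | i <;> rcases j with _ | j <;>
    simp [substPattern, junctionTile, horizontalTile, whiteTile, hatT, add_assoc,
      one_add_one_eq_two]

theorem validPattern_substPattern (hn : 1 ≤ n) (hu : u ∈ Vn n) (hv : v ∈ Vn n)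
    (hvu : u.2.2 < n → v.1 = 1) (huv : v.2.2 < n → u.1 = 1) :
    ValidPattern (Text n) (tau n v).length (tau n u).length (substPattern n u v) := by
  refine ⟨fun i j hi hj => substPattern_mem hu hv hvu huv ?_ ?_,
    fun i j _ _ => substPattern_right_eq_left i j, fun i j _ _ => substPattern_top_eq_bottom i j⟩
  · rwa [length_tau hn hv] at hi
  · rwa [length_tau hn hu] at hj

theorem bottomWord_substPattern (hv : v ∈ Vn n) :
    bottomWord (tau n v).length (substPattern n u v) = tau n v := by
  conv_rhs => rw [tau_eq_map_range hv]
  refine List.map_congr_left fun i _ => ?_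
  rcases i with _ | i <;> rfl

theorem leftWord_substPattern (hu : u ∈ Vn n) :
    leftWord (tau n u).length (substPattern n u v) = tau n u := by
  rw [leftWord_eq_bottomWord_patternTranspose, patternTranspose_substPattern,
    bottomWord_substPattern hu]

theorem substPattern_right_zero (W : ℕ) :
    (substPattern n u v W 0).right = (0, tauBit v (W + 1), v.1 - v.2.1 + W + 1) := by
  rcases W with _ | W <;>
    simp [substPattern, junctionTile, horizontalTile, add_assoc, one_add_one_eq_two]

theorem substPattern_right_succ (W j : ℕ) :
    (substPattern n u v W (j + 1)).right = (1, 1, tauBit u (j + 1) + W + 1) := by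
  rcases W with _ | W <;> simp [substPattern, horizontalTile, whiteTile, hatT, add_assoc]

end SubstPattern

theorem Text.substPattern_right {n : ℤ} (hn : 1 ≤ n) {t : WangTile Lbl} (ht : t ∈ Text n) {j : ℕ}
    (hj : j < (n + 1 - t.left.1).toNat) :
    (substPattern n t.left t.bottom (n - t.bottom.1).toNat j).right = tauLetter n t.right j := by
  rcases ht with ((((((((⟨a, b, _, _, _, _, rfl⟩ | ⟨i, _, _, rfl⟩) | ⟨i, _, _, rfl⟩) |
    ⟨i, _, _, rfl⟩) | ⟨i, _, _, rfl⟩) | ⟨s, ⟨i, _, _, rfl⟩, rfl⟩) | ⟨s, ⟨i, _, _, rfl⟩, rfl⟩) |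
    ⟨s, ⟨i, _, _, rfl⟩, rfl⟩) | ⟨s, ⟨i, _, _, rfl⟩, rfl⟩) | ⟨k, l, r, s, hkl, hrs, rfl⟩ <;>
    rcases j with _ | j <;>
    simp only [substPattern_right_zero, substPattern_right_succ, tauLetter, tauBit, hatT,
      junctionTile, jPairs, Set.mem_insert_iff, Set.mem_singleton_iff, Prod.mk.injEq,
      true_and] at * <;>
    split_ifs <;> omega

section Words

variable {n : ℤ} {α β u v : Lbl}

theorem rightWord_substPattern (hn : 1 ≤ n) (ht : (⟨α, β, u, v⟩ : WangTile Lbl) ∈ Text n) :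
    rightWord (tau n v).length (tau n u).length (substPattern n u v) = tau n α := by
  obtain ⟨hα, -, hu, hv⟩ := Text.labels_mem_Vn hn ht
  rw [tau_eq_map_range hα, length_tau hn hα, length_tau hn hu, length_tau hn hv,
    Text.right_fst_eq_left_fst ht]
  refine List.map_congr_left fun j hj => ?_
  rw [← Text.substPattern_right hn ht (List.mem_range.mp hj)]
  congr 2
  omega

theorem topWord_substPattern (hn : 1 ≤ n) (ht : (⟨α, β, u, v⟩ : WangTile Lbl) ∈ Text n) :
    topWord (tau n v).length (tau n u).length (substPattern n u v) = tau n β := by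
  rw [topWord_eq_rightWord_patternTranspose, patternTranspose_substPattern]
  exact rightWord_substPattern hn (Text.hatT_mem ht)

end Words

/-- existence and uniqueness of the valid rectangular pattern over `T'_n`
with boundary words `τ_n(α), τ_n(β), τ_n(u), τ_n(v)`, for each tile `(α,β,u,v) ∈ T'_n`. -/
theorem stmt4 (n : ℤ) (hn : 1 ≤ n) (α β u v : Lbl)
    (ht : (⟨α, β, u, v⟩ : WangTile Lbl) ∈ Text n) :
    ∃ (w h : ℕ) (p : ℕ → ℕ → WangTile Lbl),
      1 ≤ w ∧ 1 ≤ h ∧ ValidPattern (Text n) w h p ∧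
      rightWord w h p = tau n α ∧ topWord w h p = tau n β ∧
      leftWord h p = tau n u ∧ bottomWord w p = tau n v ∧
      ∀ (w' h' : ℕ) (q : ℕ → ℕ → WangTile Lbl),
        1 ≤ w' → 1 ≤ h' → ValidPattern (Text n) w' h' q →
        rightWord w' h' q = tau n α → topWord w' h' q = tau n β →
        leftWord h' q = tau n u → bottomWord w' q = tau n v →
        w' = w ∧ h' = h ∧ ∀ i j, i < w → j < h → q i j = p i j := by
  obtain ⟨-, -, hu, hv⟩ := Text.labels_mem_Vn hn ht
  have hp := validPattern_substPattern hn hu hv (Text.bottom_fst_eq_one_of_left_lt ht)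
    (Text.bottom_fst_eq_one_of_left_lt (Text.hatT_mem ht))
  refine ⟨_, _, substPattern n u v, length_tau_pos n v, length_tau_pos n u, hp,
    rightWord_substPattern hn ht, topWord_substPattern hn ht, leftWord_substPattern hu,
    bottomWord_substPattern hv, ?_⟩
  intro w' h' q _ _ hq _ _ hl hb
  obtain rfl : w' = (tau n v).length := by simpa using congrArg List.length hb
  obtain rfl : h' = (tau n u).length := by simpa using congrArg List.length hl
  refine ⟨rfl, rfl, fun i j hi hj => ?_⟩
  exact hq.eq_of_leftWord_eq_of_bottomWord_eq Text.eq_of_left_eq_of_bottom_eq hp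
    (by rw [hl, leftWord_substPattern hu]) (by rw [hb, bottomWord_substPattern hv]) hi hj
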